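/- Types bound the size of normal forms: if e is a normal expression and π ▷ Γ ⊢ e : M, then |e| ≤ |(Γ, M)|, the total size of the types in Γ plus the size of M; moreover if e is an inert term then |e| + |M| ≤ |Γ|. -/
import Mathlib


/-! Syntax of the fireball calculus -/

inductive Term : Type
  | var : ℕ → Term
  | lam : ℕ → Term → Term
  | app : Term → Term → Term
deriving DecidableEq

def isValue : Term → Prop
  | .var _ => True
  | .lam _ _ => True
  | .app _ _ => False

mutual
  inductive Fireball : Term → Prop
    | var (x : ℕ) : Fireball (.var x)
    | lam (x : ℕ) (t : Term) : Fireball (.lam x t)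
    | inert {t : Term} : Inert t → Fireball t
  inductive Inert : Term → Prop
    | head (x : ℕ) {f : Term} : Fireball f → Inert (.app (.var x) f)
    | app {i f : Term} : Inert i → Fireball f → Inert (.app i f)
end

def subst (x : ℕ) (s : Term) : Term → Term
  | .var y => if y = x then s else .var y
  | .lam y t => if y = x then .lam y t else .lam y (subst x s t)
  | .app t u => .app (subst x s t) (subst x s u)

def fv : Term → Finset ℕ
  | .var x => {x}
  | .lam x t => fv t \ {x}
  | .app t u => fv t ∪ fv u

/-! Call-by-value and call-by-fireball reduction (right-to-left evaluation) -/

inductive StepV : Term → Term → Prop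
  | beta {x : ℕ} {t v : Term} : isValue v → StepV (.app (.lam x t) v) (subst x v t)
  | appR {t u u' : Term} : StepV u u' → StepV (.app t u) (.app t u')
  | appL {t t' f : Term} : Fireball f → StepV t t' → StepV (.app t f) (.app t' f)

inductive StepF : Term → Term → Prop
  | betav {x : ℕ} {t v : Term} : isValue v → StepF (.app (.lam x t) v) (subst x v t)
  | betai {x : ℕ} {t i : Term} : Inert i → StepF (.app (.lam x t) i) (subst x i t)
  | appR {t u u' : Term} : StepF u u' → StepF (.app t u) (.app t u')
  | appL {t t' f : Term} : Fireball f → StepF t t' → StepF (.app t f) (.app t' f)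

/-! The split fireball calculus -/

abbrev Env := List (ℕ × Term)
abbrev Program := Term × Env

inductive Ctx : Type
  | hole : Ctx
  | appR : Term → Ctx → Ctx
  | appL : Ctx → Term → Ctx

def Ctx.ok : Ctx → Prop
  | .hole => True
  | .appR _ C => C.ok
  | .appL C f => C.ok ∧ Fireball f

def Ctx.fill : Ctx → Term → Term
  | .hole, t => t
  | .appR u C, t => .app u (C.fill t)
  | .appL C f, t => .app (C.fill t) f

inductive PStep : Program → Program → Prop
  | betav {C : Ctx} {x : ℕ} {t v : Term} {E : Env} : C.ok → isValue v →
      PStep (C.fill (.app (.lam x t) v), E) (C.fill (subst x v t), E)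
  | betai {C : Ctx} {x : ℕ} {t i : Term} {E : Env} : C.ok → Inert i →
      PStep (C.fill (.app (.lam x t) i), E) (C.fill t, (x, i) :: E)

def unfold : Program → Term
  | (t, []) => t
  | (t, (x, i) :: E) => unfold (subst x i t, E)
termination_by p => p.2.length
decreasing_by simp

inductive PSteps : ℕ → Program → Program → Prop
  | refl (p : Program) : PSteps 0 p p
  | step {p q r : Program} {k : ℕ} : PStep p q → PSteps k q r → PSteps (k + 1) p r

/-! Sizes of terms and programs -/

def sizeT : Term → ℕ
  | .var _ => 0
  | .lam _ _ => 0
  | .app t u => sizeT t + sizeT u + 1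

def sizeP : Program → ℕ
  | (t, E) => sizeT t + (E.map (fun xi => sizeT xi.2)).sum

/-! Multi types (non-idempotent intersection types) -/

mutual
  inductive LTy : Type
    | arr : MTy → MTy → LTy
  inductive MTy : Type
    | nil : MTy
    | cons : LTy → MTy → MTy
end

def MTy.append : MTy → MTy → MTy
  | .nil, N => N
  | .cons L M, N => .cons L (MTy.append M N)

theorem MTy.append_nil : ∀ M : MTy, MTy.append M .nil = M
  | .nil => rfl
  | .cons L M => congrArg (MTy.cons L) (MTy.append_nil M)

instance : AddZeroClass MTy where
  zero := .nil
  add := MTy.append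
  zero_add _ := rfl
  add_zero := MTy.append_nil

mutual
  def LTy.size : LTy → ℕ
    | .arr M N => 1 + M.size + N.size
  def MTy.size : MTy → ℕ
    | .nil => 0
    | .cons L M => L.size + M.size
end

/-- Type contexts: finitely supported maps from variables to multi types. -/
abbrev Ctxt := ℕ →₀ MTy

def sizeCtx (Γ : Ctxt) : ℕ := Γ.sum fun _ M => M.size

/-! The multi type system for the split fireball calculus.
    The natural-number index of a judgement is the number of `@`-rules
    of the derivation, i.e. its size. -/

inductive TyT : Ctxt → Term → MTy → ℕ → Prop
  | ax (x : ℕ) (M : MTy) : TyT (Finsupp.single x M) (.var x) M 0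
  | app {Γ Δ : Ctxt} {t u : Term} {M N : MTy} {n m : ℕ} :
      TyT Γ t (.cons (.arr M N) .nil) n → TyT Δ u M m →
      TyT (Γ + Δ) (.app t u) N (n + m + 1)
  | lam_nil (x : ℕ) (t : Term) : TyT 0 (.lam x t) .nil 0
  | lam_one {Γ : Ctxt} {t : Term} {N : MTy} {n : ℕ} (x : ℕ) :
      TyT Γ t N n →
      TyT (Γ.update x 0) (.lam x t) (.cons (.arr (Γ x) N) .nil) n
  | lam_add {Γ Δ : Ctxt} {x : ℕ} {t : Term} {M N : MTy} {n m : ℕ} :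
      TyT Γ (.lam x t) M n → TyT Δ (.lam x t) N m →
      TyT (Γ + Δ) (.lam x t) (M + N) (n + m)

inductive TyP : Ctxt → Program → MTy → ℕ → Prop
  | nil {Γ : Ctxt} {t : Term} {M : MTy} {n : ℕ} :
      TyT Γ t M n → TyP Γ (t, []) M n
  | snoc {Γ Δ : Ctxt} {t : Term} {E : Env} {x : ℕ} {i : Term} {N : MTy} {n m : ℕ} :
      TyP Γ (t, E) N n → TyT Δ i (Γ x) m → Inert i →
      TyP (Γ.update x 0 + Δ) (t, E ++ [(x, i)]) N (n + m)

/-! Expressions: terms or programs -/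

inductive Expr : Type
  | tm : Term → Expr
  | pr : Program → Expr

def TyE (Γ : Ctxt) (e : Expr) (M : MTy) (n : ℕ) : Prop :=
  match e with
  | .tm t => TyT Γ t M n
  | .pr p => TyP Γ p M n

def fvE : Expr → Finset ℕ
  | .tm t => fv t
  | .pr p => fv (unfold p)

def sizeE : Expr → ℕ
  | .tm t => sizeT t
  | .pr p => sizeP p

def normE : Expr → Prop
  | .tm t => ∀ u, ¬ StepF t u
  | .pr p => ∀ q, ¬ PStep p q

/-! Inert multi types and inert type contexts -/

inductive InertM : MTy → Prop
  | nil : InertM .nil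
  | cons {N M : MTy} : InertM N → InertM M → InertM (.cons (.arr .nil N) M)

def InertCtx (Γ : Ctxt) : Prop := ∀ x, InertM (Γ x)

theorem MTy.size_append : ∀ M N : MTy, (MTy.append M N).size = M.size + N.size
  | .nil, N => by simp [MTy.append, MTy.size]
  | .cons L M, N => by
      simp [MTy.append, MTy.size, MTy.size_append M N]; omega

theorem MTy.size_add (M N : MTy) : (M + N).size = M.size + N.size :=
  MTy.size_append M N

theorem sizeCtx_add (Γ Δ : Ctxt) : sizeCtx (Γ + Δ) = sizeCtx Γ + sizeCtx Δ := by
  unfold sizeCtx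
  exact Finsupp.sum_add_index' (fun _ => rfl) (fun _ b c => MTy.size_add b c)

theorem sizeCtx_single (x : ℕ) (M : MTy) : sizeCtx (Finsupp.single x M) = M.size :=
  Finsupp.sum_single_index rfl

theorem sizeCtx_update_zero (Γ : Ctxt) (x : ℕ) :
    (Γ x).size + sizeCtx (Γ.update x 0) = sizeCtx Γ := by
  unfold sizeCtx
  rw [← Finsupp.erase_eq_update_zero]
  exact Finsupp.add_sum_erase' Γ x (fun _ M => M.size) (fun _ => rfl)

theorem fireball_inert_bound : ∀ t : Term,
    (Fireball t → ∀ Γ M n, TyT Γ t M n → sizeT t ≤ sizeCtx Γ + M.size) ∧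
    (Inert t → ∀ Γ M n, TyT Γ t M n → sizeT t + M.size ≤ sizeCtx Γ) := by
  intro t
  induction t with
  | var x =>
    refine ⟨fun _ Γ M n h => by simp [sizeT], fun hi => ?_⟩
    cases hi
  | lam x b ih =>
    refine ⟨fun _ Γ M n h => by simp [sizeT], fun hi => ?_⟩
    cases hi
  | app t u iht ihu =>
    have key : Inert (.app t u) → ∀ Γ M n, TyT Γ (.app t u) M n →
        sizeT (.app t u) + M.size ≤ sizeCtx Γ := by
      intro hi Γ M n h
      cases h with
      | @app Γ₁ Γ₂ _ _ M' N n₁ n₂ ht hu =>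
        cases hi with
        | head x hf =>
          cases ht
          have h2 := ihu.1 hf _ _ _ hu
          simp only [sizeT, sizeCtx_add, sizeCtx_single, MTy.size, LTy.size] at *
          omega
        | app hti hf =>
          have h1 := iht.2 hti _ _ _ ht
          have h2 := ihu.1 hf _ _ _ hu
          simp only [sizeT, sizeCtx_add, MTy.size, LTy.size] at *
          omega
    refine ⟨fun hf Γ M n h => ?_, key⟩
    cases hf with
    | inert hi => have := key hi Γ M n h; omega

theorem prog_bound {Γ : Ctxt} {p : Program} {M : MTy} {n : ℕ}
    (h : TyP Γ p M n) : Fireball p.1 → sizeP p ≤ sizeCtx Γ + M.size := by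
  induction h with
  | nil ht =>
    intro hf
    have := (fireball_inert_bound _).1 hf _ _ _ ht
    simpa [sizeP] using this
  | @snoc Γ Δ t E x i N n m hp ht hi ih =>
    intro hf
    have h1 := ih hf
    have h2 := (fireball_inert_bound i).2 hi _ _ _ ht
    have h3 := sizeCtx_update_zero Γ x
    simp only [sizeP, List.map_append, List.sum_append, List.map_cons, List.map_nil, List.sum_cons, List.sum_nil, sizeCtx_add] at *
    omega

theorem fireball_value_or_inert {t : Term} (h : Fireball t) : isValue t ∨ Inert t := by
  cases h with
  | var x => exact Or.inl trivial
  | lam x b => exact Or.inl trivial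
  | inert hi => exact Or.inr hi

theorem normal_fireball : ∀ t : Term, (∀ u, ¬ StepF t u) → Fireball t := by
  intro t
  induction t with
  | var x => exact fun _ => .var x
  | lam x b _ => exact fun _ => .lam x b
  | app t u iht ihu =>
    intro hn
    have hu : Fireball u := ihu (fun v hv => hn _ (StepF.appR hv))
    have ht : Fireball t := iht (fun v hv => hn _ (StepF.appL hu hv))
    refine Fireball.inert ?_
    cases ht with
    | var x => exact .head x hu
    | lam x b =>
      rcases fireball_value_or_inert hu with hv | hi
      · exact (hn _ (StepF.betav hv)).elim
      · exact (hn _ (StepF.betai hi)).elim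
    | inert hi => exact .app hi hu

theorem stepF_decomp {t t' : Term} (h : StepF t t') :
    ∃ C x s f, Ctx.ok C ∧ (isValue f ∨ Inert f) ∧ t = C.fill (.app (.lam x s) f) := by
  induction h with
  | betav hv => exact ⟨.hole, _, _, _, trivial, Or.inl hv, rfl⟩
  | betai hi => exact ⟨.hole, _, _, _, trivial, Or.inr hi, rfl⟩
  | @appR a _ _ _ ih =>
    obtain ⟨C, x, s, f, hok, hf, rfl⟩ := ih
    exact ⟨.appR a C, x, s, f, hok, hf, rfl⟩
  | @appL _ _ g hfb _ ih =>
    obtain ⟨C, x, s, f, hok, hf, rfl⟩ := ih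
    exact ⟨.appL C g, x, s, f, ⟨hok, hfb⟩, hf, rfl⟩

theorem prog_normal_fireball {t : Term} {E : Env}
    (hn : ∀ q, ¬ PStep (t, E) q) : Fireball t := by
  apply normal_fireball
  intro u hu
  obtain ⟨C, x, s, f, hok, hf, rfl⟩ := stepF_decomp hu
  rcases hf with hv | hi
  · exact hn _ (PStep.betav hok hv)
  · exact hn _ (PStep.betai hok hi)

theorem types_bound_size_of_normal_forms {Γ : Ctxt} {e : Expr} {M : MTy} {n : ℕ}
    (he : normE e) (h : TyE Γ e M n) :
    sizeE e ≤ sizeCtx Γ + M.size ∧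
    (∀ i : Term, e = Expr.tm i → Inert i → sizeT i + M.size ≤ sizeCtx Γ) := by
  cases e with
  | tm t =>
    refine ⟨(fireball_inert_bound t).1 (normal_fireball t he) _ _ _ h, ?_⟩
    intro i heq hi
    injection heq with heq
    subst heq
    exact (fireball_inert_bound t).2 hi _ _ _ h
  | pr p =>
    obtain ⟨t, E⟩ := p
    refine ⟨prog_bound h (prog_normal_fireball he), ?_⟩
    rintro i h' hi
    cases h'
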